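/- For a Riordan array D = (g, f) with entries d_{n,k} = [t^n] g·f^k and a sequence Z with generating function Z(t), the recurrence d_{n+1,0} = Σ_{j≥0} z_j d_{n,j} holds for all n ≥ 0 if and only if g(t) = g(0)/(1 − t·Z(f(t))). -/

import Mathlib

open PowerSeries

/-- Composition `g ∘ f` of formal power series (meaningful when `f` has zero
constant term). -/
noncomputable def pcomp {K : Type*} [Field K] (g f : PowerSeries K) : PowerSeries K :=
  PowerSeries.mk fun n => ∑ k ∈ Finset.range (n + 1), coeff k g * coeff n (f ^ k)

/-! Writing `h = Z ∘ f`, the identity `g = g(0)/(1 − t h)` says exactly that `g (1 − t h)` has no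
coefficients in positive degree, i.e. `[tⁿ⁺¹] g = [tⁿ] (g h)` for all `n`. Since `f` has zero
constant term, `[tⁿ] (g · (Z ∘ f)) = ∑_{j ≤ n} z_j [tⁿ] (g fʲ)`, which is the Z-recurrence. -/

lemma coeff_pow_eq_zero_of_lt {R : Type*} [CommSemiring R] {f : PowerSeries R}
    (hf0 : constantCoeff f = 0) {k n : ℕ} (h : n < k) : coeff n (f ^ k) = 0 :=
  X_pow_dvd_iff.mp (pow_dvd_pow_of_dvd (X_dvd_iff.mpr hf0) k) n h

lemma coeff_pcomp_eq_sum_range_of_le {K : Type*} [Field K] {f : PowerSeries K}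
    (Z : PowerSeries K) (hf0 : constantCoeff f = 0) {m N : ℕ} (hmN : m ≤ N) :
    coeff m (pcomp Z f) = ∑ k ∈ Finset.range (N + 1), coeff k Z * coeff m (f ^ k) := by
  rw [pcomp, coeff_mk]
  refine Finset.sum_subset (Finset.range_subset_range.mpr (by omega)) fun k hkN hkm => ?_
  rw [Finset.mem_range] at hkN hkm
  rw [coeff_pow_eq_zero_of_lt hf0 (by omega), mul_zero]

lemma coeff_mul_pcomp {K : Type*} [Field K] (g Z : PowerSeries K) {f : PowerSeries K}
    (hf0 : constantCoeff f = 0) (n : ℕ) :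
    coeff n (g * pcomp Z f) =
      ∑ j ∈ Finset.range (n + 1), coeff j Z * coeff n (g * f ^ j) := by
  calc coeff n (g * pcomp Z f)
      = ∑ p ∈ Finset.HasAntidiagonal.antidiagonal n, ∑ j ∈ Finset.range (n + 1),
          coeff j Z * (coeff p.1 g * coeff p.2 (f ^ j)) := by
        rw [coeff_mul]
        refine Finset.sum_congr rfl fun p hp => ?_
        rw [coeff_pcomp_eq_sum_range_of_le Z hf0 (Finset.HasAntidiagonal.antidiagonal.snd_le hp), Finset.mul_sum]
        exact Finset.sum_congr rfl fun j _ => by ring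
    _ = ∑ j ∈ Finset.range (n + 1), coeff j Z * coeff n (g * f ^ j) := by
        rw [Finset.sum_comm]
        exact Finset.sum_congr rfl fun j _ => by rw [coeff_mul, Finset.mul_sum]

lemma mul_one_sub_X_mul_eq_C_iff {R : Type*} [CommRing R] (g h : PowerSeries R) :
    g * (1 - X * h) = C (constantCoeff g) ↔ ∀ n : ℕ, coeff (n + 1) g = coeff n (g * h) := by
  have hsucc : ∀ n : ℕ, coeff (n + 1) (g * (1 - X * h)) = coeff (n + 1) g - coeff n (g * h) := by
    intro n
    rw [mul_sub, mul_one, mul_left_comm, map_sub, coeff_succ_X_mul]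
  constructor
  · intro hg n
    simpa [hg, coeff_C, sub_eq_zero] using (hsucc n).symm
  · intro hg
    ext (_ | n)
    · simp
    · rw [hsucc, hg, sub_self, coeff_C, if_neg n.succ_ne_zero]

theorem riordan_Z_sequence {K : Type*} [Field K]
    (g f Z : PowerSeries K)
    (hf0 : constantCoeff f = 0) :
    (∀ n : ℕ, coeff (n + 1) g =
      ∑ j ∈ Finset.range (n + 1), coeff j Z * coeff n (g * f ^ j)) ↔
    g = C (constantCoeff g) * (1 - X * pcomp Z f)⁻¹ := by
  have hunit : constantCoeff (1 - X * pcomp Z f) ≠ 0 := by simp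
  rw [eq_mul_inv_iff_mul_eq hunit, mul_one_sub_X_mul_eq_C_iff]
  simp only [coeff_mul_pcomp g Z hf0]
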